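/- Let Γ be a group acting faithfully and self-similarly on the rooted tree X* over a finite set X with |X| ≥ 2, such that every g ∈ Γ is finite-state. For u, v ∈ X* of equal length and g ∈ Γ, let g_{u,v} : vX^ℕ → uX^ℕ be given by g_{u,v}(vw) = u g(w). Then the Bernoulli measure μ on X^ℕ satisfies μ(Fix_{g_{u,v}} \ int(Fix_{g_{u,v}})) = 0 for all such g, u, v. -/

import Mathlib

/-- An automorphism of the rooted tree `X*` of finite words over `X`: a bijection of
`List X` preserving lengths and prefixes. -/
structure TreeAut (X : Type*) where
  toFun : List X → List X
  invFun : List X → List X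
  left_inv : Function.LeftInverse invFun toFun
  right_inv : Function.RightInverse invFun toFun
  length_eq : ∀ w : List X, (toFun w).length = w.length
  take_append : ∀ w v : List X, (toFun (w ++ v)).take w.length = toFun w

/-- The restriction (section) `φ|_w` of a tree automorphism `φ` at the word `w`,
characterised by `φ(w v) = φ(w) φ|_w(v)`. -/
def TreeAut.restrict {X : Type*} (φ : TreeAut X) (w : List X) : List X → List X :=
  fun v => (φ.toFun (w ++ v)).drop w.length

/-- The set `P_k` of words of length `k` fixed by `φ` whose restriction is nontrivial. -/
def TreeAut.badWords {X : Type*} (φ : TreeAut X) (k : ℕ) : Set (List X) :=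
  {w : List X | w.length = k ∧ φ.toFun w = w ∧ φ.restrict w ≠ id}

open MeasureTheory
open scoped ENNReal

/-- The prefix of length `n` of a sequence `x : ℕ → X`, as a word. -/
def prefixWord {X : Type*} (x : ℕ → X) (n : ℕ) : List X :=
  List.ofFn (fun i : Fin n => x i)

/-- The cylinder set of sequences beginning with the word `w`. -/
def cylinder {X : Type*} (w : List X) : Set (ℕ → X) :=
  {x : ℕ → X | prefixWord x w.length = w}

/-- The homeomorphism of `X^ℕ` induced by a tree automorphism `φ`: the `n`-th letter of
`φ(x)` is the `n`-th letter of `φ` applied to the prefix of `x` of length `n + 1`. -/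
def TreeAut.seqAct {X : Type*} (φ : TreeAut X) (x : ℕ → X) : ℕ → X :=
  fun n => (φ.toFun (prefixWord x (n + 1))).getD n (x n)

/-- The fixed-point set in `X^ℕ` of the homeomorphism induced by `φ`. -/
def TreeAut.fixSeq {X : Type*} (φ : TreeAut X) : Set (ℕ → X) :=
  {x : ℕ → X | φ.seqAct x = x}

/-- A faithful self-similar action of a group `Γ` on the rooted tree `X*`, by tree
automorphisms, such that all restrictions `g|_w` again belong to the action. -/
structure SelfSimilarAction (Γ : Type*) [Group Γ] (X : Type*) where
  act : Γ → TreeAut X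
  act_one : ∀ w : List X, (act 1).toFun w = w
  act_mul : ∀ (g h : Γ) (w : List X), (act (g * h)).toFun w = (act g).toFun ((act h).toFun w)
  faithful : ∀ g : Γ, (∀ w : List X, (act g).toFun w = w) → g = 1
  selfSimilar : ∀ (g : Γ) (w : List X), ∃ h : Γ, (act g).restrict w = (act h).toFun

/-- A self-similar action is finite-state if each `g` has only finitely many
restrictions `g|_w`. -/
def SelfSimilarAction.FiniteState {Γ : Type*} [Group Γ] {X : Type*}
    (S : SelfSimilarAction Γ X) : Prop :=
  ∀ g : Γ, (Set.range fun w : List X => (S.act g).restrict w).Finite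

/-- The word `w` followed by the sequence `x`. -/
def wordConcat {X : Type*} (w : List X) (x : ℕ → X) : ℕ → X :=
  fun n => if h : n < w.length then w.get ⟨n, h⟩ else x (n - w.length)

/-- The partial homeomorphism `g_{u,v} : vX^ℕ → uX^ℕ`, `g_{u,v}(v w) = u g(w)`,
implemented as a total map which on the cylinder `vX^ℕ` sends `v·w ↦ u·g(w)`. -/
def SelfSimilarAction.cosetMap {Γ : Type*} [Group Γ] {X : Type*}
    (S : SelfSimilarAction Γ X) (g : Γ) (u v : List X) (x : ℕ → X) : ℕ → X :=
  wordConcat u ((S.act g).seqAct (fun n => x (n + v.length)))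

/-- The fixed-point set of `g_{u,v}` inside its domain `vX^ℕ`. -/
def SelfSimilarAction.fixCosetMap {Γ : Type*} [Group Γ] {X : Type*}
    (S : SelfSimilarAction Γ X) (g : Γ) (u v : List X) : Set (ℕ → X) :=
  {x : ℕ → X | x ∈ cylinder v ∧ S.cosetMap g u v x = x}

/-!
If `u ≠ v` the fixed-point set of `g_{u,v}` is empty. For `u = v`, a fixed point outside the
interior lies, for every `k`, in a cylinder `u w` with `|w| = k`, `g(w) = w` and `g|_w ≠ 1`,
since otherwise the whole cylinder `u w X^ℕ` is fixed. As `g` has finitely many restrictions,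
there is a single `N` such that each nontrivial restriction moves some word of length `N`; so
of the `|X|^N` extensions of such a `w` by `N` letters at most `|X|^N - 1` are again of this
kind. Thus the boundary has measure at most `((|X|^N - 1) / |X|^N)^m` for every `m`.
-/

namespace TreeAut

variable {X : Type*} (φ : TreeAut X)

theorem toFun_append (w v : List X) :
    φ.toFun (w ++ v) = φ.toFun w ++ φ.restrict w v := by
  conv_lhs => rw [← List.take_append_drop w.length (φ.toFun (w ++ v)), φ.take_append]
  rfl

theorem length_restrict (w v : List X) : (φ.restrict w v).length = v.length := by
  simp only [restrict, List.length_drop, φ.length_eq, List.length_append]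
  omega

theorem take_toFun (w : List X) (n : ℕ) : (φ.toFun w).take n = φ.toFun (w.take n) := by
  have h := φ.take_append (w.take n) (w.drop n)
  rw [List.take_append_drop, List.length_take] at h
  rw [← h, List.take_eq_take_iff, φ.length_eq, min_assoc, min_self]

theorem restrict_append (w s r : List X) :
    φ.restrict w (s ++ r) = φ.restrict w s ++ φ.restrict (w ++ s) r := by
  have h := φ.toFun_append (w ++ s) r
  rw [List.append_assoc, φ.toFun_append, φ.toFun_append, List.append_assoc] at h
  exact List.append_cancel_left h

theorem restrict_append_ne {w s : List X} (hs : φ.restrict w s ≠ s) (r : List X) :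
    φ.restrict w (s ++ r) ≠ s ++ r := by
  rw [φ.restrict_append]
  exact fun h => hs (List.append_inj h (φ.length_restrict w s)).1

theorem restrict_append_eq_id {w : List X} (hw : φ.restrict w = id) (s : List X) :
    φ.restrict (w ++ s) = id := by
  funext r
  have h := φ.restrict_append w s r
  rw [hw] at h
  exact (List.append_cancel_left h).symm

theorem toFun_append_eq_self {w : List X} (hw : φ.toFun w = w) (hid : φ.restrict w = id)
    (r : List X) : φ.toFun (w ++ r) = w ++ r := by
  rw [φ.toFun_append, hw, hid, id]

theorem restrict_eq_self_of_toFun_append_eq_self {w r : List X} (hw : φ.toFun w = w)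
    (h : φ.toFun (w ++ r) = w ++ r) : φ.restrict w r = r := by
  rw [φ.toFun_append, hw] at h
  exact List.append_cancel_left h

theorem eventually_exists_restrict_ne [Nonempty X] {w : List X} (hw : φ.restrict w ≠ id) :
    ∀ᶠ N in Filter.atTop, ∃ t : List X, t.length = N ∧ φ.restrict w t ≠ t := by
  obtain ⟨s, hs⟩ := Function.ne_iff.1 hw
  filter_upwards [Filter.eventually_ge_atTop s.length] with N hN
  refine ⟨s ++ List.replicate (N - s.length) (Classical.arbitrary X), ?_,
    φ.restrict_append_ne hs _⟩
  simp only [List.length_append, List.length_replicate]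
  omega

theorem exists_length_eq_restrict_ne [Nonempty X] (hφ : (Set.range φ.restrict).Finite) :
    ∃ N : ℕ, ∀ w : List X, φ.restrict w ≠ id →
      ∃ t : List X, t.length = N ∧ φ.restrict w t ≠ t := by
  have hN : ∀ᶠ N in Filter.atTop, ∀ q ∈ {q ∈ Set.range φ.restrict | q ≠ id},
      ∃ t : List X, t.length = N ∧ q t ≠ t := by
    refine (Filter.eventually_all_finite (hφ.sep _)).2 ?_
    rintro _ ⟨⟨w, rfl⟩, hw⟩
    exact φ.eventually_exists_restrict_ne hw
  obtain ⟨N, hN⟩ := hN.exists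
  exact ⟨N, fun w hw => hN _ ⟨⟨w, rfl⟩, hw⟩⟩

theorem finite_badWords [Finite X] (k : ℕ) : (φ.badWords k).Finite :=
  (List.finite_length_eq X k).subset fun _ hw => hw.1

theorem take_mem_badWords {k N : ℕ} {w : List X} (hw : w ∈ φ.badWords (k + N)) :
    w.take k ∈ φ.badWords k := by
  obtain ⟨hlen, hfix, hres⟩ := hw
  refine ⟨by simp [hlen], by rw [← φ.take_toFun, hfix], fun hid => hres ?_⟩
  rw [← List.take_append_drop k w]
  exact φ.restrict_append_eq_id hid _

end TreeAut

section Counting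

def wordsOfLength (X : Type*) [Fintype X] (k : ℕ) : Finset (List X) :=
  (Finset.univ : Finset (List.Vector X k)).map ⟨List.Vector.toList, List.Vector.toList_injective⟩

variable {X : Type*} [Fintype X]

theorem mem_wordsOfLength {k : ℕ} {w : List X} : w ∈ wordsOfLength X k ↔ w.length = k := by
  simp only [wordsOfLength, Finset.mem_map, Finset.mem_univ, true_and, Function.Embedding.coeFn_mk]
  exact ⟨fun ⟨v, hv⟩ => hv ▸ v.toList_length, fun h => ⟨⟨w, h⟩, rfl⟩⟩

theorem card_wordsOfLength (k : ℕ) : (wordsOfLength X k).card = Fintype.card X ^ k := by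
  simp [wordsOfLength, card_vector]

namespace TreeAut

variable (φ : TreeAut X) {N : ℕ}

theorem card_badWords_add_le
    (hN : ∀ w : List X, φ.restrict w ≠ id → ∃ t : List X, t.length = N ∧ φ.restrict w t ≠ t)
    (k : ℕ) :
    (φ.finite_badWords (k + N)).toFinset.card ≤
      (φ.finite_badWords k).toFinset.card * (Fintype.card X ^ N - 1) := by
  classical
  let fixedExtensions (w : List X) : Finset (List X) :=
    ((wordsOfLength X N).filter fun b => φ.restrict w b = b).image (w ++ ·)
  have hsub : (φ.finite_badWords (k + N)).toFinset ⊆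
      (φ.finite_badWords k).toFinset.biUnion fixedExtensions := by
    intro w hw
    rw [Set.Finite.mem_toFinset] at hw
    have hk := φ.take_mem_badWords hw
    have hsplit := List.take_append_drop k w
    simp only [Finset.mem_biUnion, Set.Finite.mem_toFinset, fixedExtensions, Finset.mem_image,
      Finset.mem_filter, mem_wordsOfLength]
    refine ⟨w.take k, hk, w.drop k, ⟨by simp [hw.1], ?_⟩, hsplit⟩
    exact φ.restrict_eq_self_of_toFun_append_eq_self hk.2.1 (by rw [hsplit]; exact hw.2.1)
  have hfiber : ∀ w ∈ (φ.finite_badWords k).toFinset,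
      (fixedExtensions w).card ≤ Fintype.card X ^ N - 1 := by
    intro w hw
    rw [Set.Finite.mem_toFinset] at hw
    obtain ⟨t, htN, ht⟩ := hN w hw.2.2
    calc (fixedExtensions w).card
        ≤ ((wordsOfLength X N).filter fun b => φ.restrict w b = b).card := Finset.card_image_le
      _ ≤ ((wordsOfLength X N).erase t).card :=
          Finset.card_le_card fun b hb => by
            rw [Finset.mem_filter] at hb
            exact Finset.mem_erase.2 ⟨by rintro rfl; exact ht hb.2, hb.1⟩
      _ = Fintype.card X ^ N - 1 := by
          rw [Finset.card_erase_of_mem (mem_wordsOfLength.2 htN), card_wordsOfLength]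
  exact (Finset.card_le_card hsub).trans (Finset.card_biUnion_le_card_mul _ _ _ hfiber)

theorem card_badWords_mul_le
    (hN : ∀ w : List X, φ.restrict w ≠ id → ∃ t : List X, t.length = N ∧ φ.restrict w t ≠ t)
    (m : ℕ) :
    (φ.finite_badWords (m * N)).toFinset.card ≤ (Fintype.card X ^ N - 1) ^ m := by
  induction m with
  | zero =>
    refine (Finset.card_le_card fun w hw => ?_).trans (card_wordsOfLength (X := X) 0).le
    rw [Set.Finite.mem_toFinset] at hw
    exact mem_wordsOfLength.2 (by simpa using hw.1)
  | succ m ih =>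
    rw [Nat.succ_mul, pow_succ]
    exact (φ.card_badWords_add_le hN (m * N)).trans (Nat.mul_le_mul_right _ ih)

end TreeAut

end Counting

section Sequences

variable {X : Type*}

@[simp]
theorem length_prefixWord (x : ℕ → X) (n : ℕ) : (prefixWord x n).length = n :=
  List.length_ofFn

@[simp]
theorem getElem_prefixWord (x : ℕ → X) {n i : ℕ} (hi : i < (prefixWord x n).length) :
    (prefixWord x n)[i] = x i :=
  List.getElem_ofFn ..

theorem prefixWord_add (x : ℕ → X) (m k : ℕ) :
    prefixWord x (m + k) = prefixWord x m ++ prefixWord (fun n => x (n + m)) k := by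
  refine List.ext_getElem (by simp) fun i h _ => ?_
  simp only [getElem_prefixWord, List.getElem_append, length_prefixWord]
  split_ifs
  · rfl
  · congr 1
    omega

theorem take_prefixWord (x : ℕ → X) {m n : ℕ} (h : m ≤ n) :
    (prefixWord x n).take m = prefixWord x m := by
  obtain ⟨k, rfl⟩ := Nat.exists_eq_add_of_le h
  simp [prefixWord_add]

theorem eq_of_forall_prefixWord_eq {x y : ℕ → X} (h : ∀ n, prefixWord x n = prefixWord y n) :
    x = y := by
  funext n
  simpa using congrArg (·[n]?) (h (n + 1))

theorem prefixWord_seqAct (φ : TreeAut X) (x : ℕ → X) (n : ℕ) :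
    prefixWord (φ.seqAct x) n = φ.toFun (prefixWord x n) := by
  refine List.ext_getElem (by simp [φ.length_eq]) fun i hi _ => ?_
  have hi' : i < n := by simpa using hi
  rw [getElem_prefixWord, TreeAut.seqAct, ← take_prefixWord x hi', ← φ.take_toFun,
    List.getD_eq_getElem _ _ (by simp [φ.length_eq]; omega)]
  simp

theorem mem_fixSeq_iff (φ : TreeAut X) (x : ℕ → X) :
    x ∈ φ.fixSeq ↔ ∀ n, φ.toFun (prefixWord x n) = prefixWord x n := by
  simp only [TreeAut.fixSeq, Set.mem_ofPred_eq, ← prefixWord_seqAct]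
  exact ⟨fun h n => by rw [h], eq_of_forall_prefixWord_eq⟩

theorem mem_cylinder_iff {w : List X} {x : ℕ → X} : x ∈ cylinder w ↔ prefixWord x w.length = w :=
  Iff.rfl

theorem mem_cylinder_append {v w : List X} {x : ℕ → X} :
    x ∈ cylinder (v ++ w) ↔ x ∈ cylinder v ∧ (fun n => x (n + v.length)) ∈ cylinder w := by
  simp only [mem_cylinder_iff, List.length_append, prefixWord_add]
  exact ⟨fun h => List.append_inj h (by simp), fun ⟨hv, hw⟩ => by rw [hv, hw]⟩

theorem isOpen_cylinder [TopologicalSpace X] [DiscreteTopology X] (w : List X) :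
    IsOpen (cylinder w) :=
  have hrestrict : Continuous fun (x : ℕ → X) (i : Fin w.length) => x i :=
    continuous_pi fun i => continuous_apply (i : ℕ)
  (isOpen_discrete {f : Fin w.length → X | List.ofFn f = w}).preimage hrestrict

theorem prefixWord_wordConcat (w : List X) (x : ℕ → X) :
    prefixWord (wordConcat w x) w.length = w :=
  List.ext_getElem (by simp) fun i hi _ => by simp_all [wordConcat]

theorem wordConcat_injective (w : List X) : Function.Injective (wordConcat w) :=
  fun x y h => funext fun n => by simpa [wordConcat] using congrFun h (n + w.length)

theorem wordConcat_of_mem_cylinder {w : List X} {x : ℕ → X} (hx : x ∈ cylinder w) :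
    wordConcat w (fun n => x (n + w.length)) = x := by
  funext n
  unfold wordConcat
  split_ifs with hn
  · conv_rhs => rw [← getElem_prefixWord x (by simpa using hn)]
    simp [mem_cylinder_iff.1 hx]
  · show x (n - w.length + w.length) = x n
    rw [Nat.sub_add_cancel (not_lt.1 hn)]

end Sequences

section FixedPoints

variable {X : Type*}

theorem TreeAut.cylinder_subset_fixSeq (φ : TreeAut X) {w : List X} (hw : φ.toFun w = w)
    (hid : φ.restrict w = id) : cylinder w ⊆ φ.fixSeq := by
  intro y hy
  rw [mem_fixSeq_iff]
  intro n
  rcases le_total n w.length with hn | hn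
  · rw [← take_prefixWord y hn, mem_cylinder_iff.1 hy, ← φ.take_toFun, hw]
  · obtain ⟨k, rfl⟩ := Nat.exists_eq_add_of_le hn
    rw [prefixWord_add, mem_cylinder_iff.1 hy, φ.toFun_append_eq_self hw hid]

variable {Γ : Type*} [Group Γ] (S : SelfSimilarAction Γ X) (g : Γ)

theorem SelfSimilarAction.fixCosetMap_eq_empty {u v : List X} (hlen : u.length = v.length)
    (huv : u ≠ v) : S.fixCosetMap g u v = ∅ := by
  refine Set.eq_empty_of_forall_notMem fun x ⟨hv, hx⟩ => huv ?_
  have hu := prefixWord_wordConcat u ((S.act g).seqAct fun n => x (n + v.length))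
  rw [SelfSimilarAction.cosetMap] at hx
  rw [← hu, hx, hlen, mem_cylinder_iff.1 hv]

theorem SelfSimilarAction.mem_fixCosetMap_self_iff {v : List X} {x : ℕ → X} :
    x ∈ S.fixCosetMap g v v ↔
      x ∈ cylinder v ∧ (fun n => x (n + v.length)) ∈ (S.act g).fixSeq :=
  and_congr_right fun hv =>
    (Eq.congr_right (wordConcat_of_mem_cylinder hv)).symm.trans (wordConcat_injective v).eq_iff

theorem SelfSimilarAction.fixCosetMap_self_diff_interior_subset [TopologicalSpace X]
    [DiscreteTopology X] (v : List X) (k : ℕ) :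
    S.fixCosetMap g v v \ interior (S.fixCosetMap g v v) ⊆
      ⋃ w ∈ (S.act g).badWords k, cylinder (v ++ w) := by
  rintro x ⟨hx, hint⟩
  rw [S.mem_fixCosetMap_self_iff] at hx
  set w := prefixWord (fun n => x (n + v.length)) k
  have hxw : x ∈ cylinder (v ++ w) := mem_cylinder_append.2 ⟨hx.1, by simp [mem_cylinder_iff, w]⟩
  have hw : (S.act g).toFun w = w := ((mem_fixSeq_iff _ _).1 hx.2) k
  refine Set.mem_biUnion ⟨length_prefixWord _ _, hw, fun hid => hint ?_⟩ hxw
  refine interior_maximal (fun z hz => ?_) (isOpen_cylinder _) hxw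
  obtain ⟨hzv, hzw⟩ := mem_cylinder_append.1 hz
  exact (S.mem_fixCosetMap_self_iff g).2 ⟨hzv, (S.act g).cylinder_subset_fixSeq hw hid hzw⟩

end FixedPoints

theorem measure_biUnion_cylinder_append_le {X : Type*} [MeasurableSpace X]
    {μ : Measure (ℕ → X)} {c : ℝ≥0∞} (hμ : ∀ w : List X, μ (cylinder w) = c ^ w.length)
    (v : List X) {s : Set (List X)} (hs : s.Finite) {k : ℕ} (hk : ∀ w ∈ s, w.length = k) :
    μ (⋃ w ∈ s, cylinder (v ++ w)) ≤ hs.toFinset.card * c ^ (v.length + k) := by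
  calc μ (⋃ w ∈ s, cylinder (v ++ w)) = μ (⋃ w ∈ hs.toFinset, cylinder (v ++ w)) := by simp
    _ ≤ ∑ w ∈ hs.toFinset, μ (cylinder (v ++ w)) := measure_biUnion_finset_le _ _
    _ = hs.toFinset.card * c ^ (v.length + k) := by
      rw [Finset.sum_congr rfl fun w hw => by
        rw [hμ, List.length_append, hk w (hs.mem_toFinset.1 hw)], Finset.sum_const, nsmul_eq_mul]

theorem ENNReal.natCast_sub_one_mul_inv_lt_one {n : ℕ} (hn : 0 < n) :
    ((n - 1 : ℕ) : ℝ≥0∞) * (n : ℝ≥0∞)⁻¹ < 1 := by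
  rw [← div_eq_mul_inv]
  refine ENNReal.div_lt_of_lt_mul ?_
  rw [one_mul]
  exact_mod_cast Nat.sub_lt hn one_pos

/-- Let `Γ` act faithfully and self-similarly on `X*` (`|X| ≥ 2`),
with every `g ∈ Γ` finite-state.  For `u, v ∈ X*` of equal length and `g ∈ Γ`, the
Bernoulli measure `μ` on `X^ℕ` satisfies
`μ(Fix_{g_{u,v}} \ interior Fix_{g_{u,v}}) = 0`. -/
theorem selfSimilar_fix_boundary_null
    {Γ : Type*} [Group Γ] {X : Type*} [Fintype X] [TopologicalSpace X]
    [DiscreteTopology X] [MeasurableSpace X] (hX : 2 ≤ Fintype.card X)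
    (S : SelfSimilarAction Γ X) (hfs : S.FiniteState)
    (μ : MeasureTheory.Measure (ℕ → X))
    (hμ : ∀ w : List X, μ (cylinder w) = ((Fintype.card X : ℝ≥0∞))⁻¹ ^ w.length) :
    ∀ (g : Γ) (u v : List X), u.length = v.length →
      μ (S.fixCosetMap g u v \ interior (S.fixCosetMap g u v)) = 0 := by
  intro g u v hlen
  rcases eq_or_ne u v with rfl | huv
  swap
  · simp [S.fixCosetMap_eq_empty g hlen huv]
  have : Nonempty X := Fintype.card_pos_iff.1 (by omega)
  obtain ⟨N, hN⟩ := (S.act g).exists_length_eq_restrict_ne (hfs g)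
  set c : ℝ≥0∞ := (Fintype.card X : ℝ≥0∞)⁻¹
  have hc : c ≤ 1 := ENNReal.inv_le_one.2 (by exact_mod_cast Fintype.card_pos)
  have hr : ((Fintype.card X ^ N - 1 : ℕ) : ℝ≥0∞) * c ^ N < 1 := by
    simpa [c, ENNReal.inv_pow] using
      ENNReal.natCast_sub_one_mul_inv_lt_one (pow_pos Fintype.card_pos N)
  refine ENNReal.eq_zero_of_le_mul_pow (ε := 1) hr fun m => ?_
  calc μ (S.fixCosetMap g u u \ interior (S.fixCosetMap g u u))
      ≤ μ (⋃ w ∈ (S.act g).badWords (m * N), cylinder (u ++ w)) :=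
        measure_mono (S.fixCosetMap_self_diff_interior_subset g u _)
    _ ≤ ((S.act g).finite_badWords (m * N)).toFinset.card * c ^ (u.length + m * N) :=
        measure_biUnion_cylinder_append_le hμ u _ fun w hw => hw.1
    _ ≤ ((Fintype.card X ^ N - 1 : ℕ) : ℝ≥0∞) ^ m * c ^ (m * N) := by
        gcongr ?_ * ?_
        · exact_mod_cast (S.act g).card_badWords_mul_le hN m
        · exact pow_le_pow_of_le_one zero_le hc (Nat.le_add_left _ _)
    _ = ((1 : NNReal) : ℝ≥0∞) * (((Fintype.card X ^ N - 1 : ℕ) : ℝ≥0∞) * c ^ N) ^ m := by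
        rw [ENNReal.coe_one, one_mul, mul_pow, pow_mul']
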